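/- Let M_a = 0.014507 and define d^a on C ∪ F as M_a times the (unweighted) graph distance between blocks in the graph whose vertices are the blocks B1 = {1,2,3}, B2 = {4,5,6}, {7}, {a}, {b}, {c,e}, {d,f,g} and whose edges are B1–a, B1–b, B1–{c,e}, B2–{d,f,g}, B2–a, 7–a, 7–b (points in the same block are at distance 0). Then d^a is a pseudometric on C ∪ F, d^a is consistent with σ*, Σ_{j∈C} d^a(a,j) = 7·M_a > 0, and facility a minimizes Σ_{j∈C} d^a(o,j) over o ∈ F. -/
import Mathlib


/-- Points of the instance: `Sum.inl j` is client `j`, `Sum.inr i` is facility `i`. -/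
abbrev Pt := Fin 7 ⊕ Fin 7

/-- `d` is a pseudometric: nonnegative, symmetric, zero on the diagonal,
and satisfying the triangle inequality `d x y ≤ d x z + d y z`. -/
def IsPseudometric (d : Pt → Pt → ℝ) : Prop :=
  (∀ x y, 0 ≤ d x y) ∧ (∀ x y, d x y = d y x) ∧ (∀ x, d x x = 0) ∧
    (∀ x y z, d x y ≤ d x z + d y z)

/-- Rank function of the instance `I*` (facilities `a,…,g` are `0,…,6`):
clients 1,2,3 rank c ≻ e ≻ b ≻ a ≻ f ≻ g ≻ d, clients 4,5,6 rank
d ≻ g ≻ f ≻ a ≻ e ≻ b ≻ c, client 7 ranks b ≻ a ≻ f ≻ g ≻ e ≻ c ≻ d. -/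
def rkStar (j : Fin 7) : Fin 7 → ℕ :=
  if j.val ≤ 2 then ![3, 2, 0, 6, 1, 4, 5]
  else if j.val ≤ 5 then ![3, 5, 6, 0, 4, 2, 1]
  else ![1, 0, 5, 6, 4, 2, 3]

/-- The preference profile `σ*` of the instance `I*`: `a ≽_j b` iff `a` has
(weakly) smaller rank than `b` in client `j`'s list. -/
def sigmaStar (j : Fin 7) (a b : Fin 7) : Prop := rkStar j a ≤ rkStar j b

/-- `d` is consistent with the profile `σ`: whenever client `j` prefers `a` to `b`,
facility `a` is at least as close to `j` as `b`. -/
def Consistent (d : Pt → Pt → ℝ) (σ : Fin 7 → Fin 7 → Fin 7 → Prop) : Prop :=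
  ∀ j a b, σ j a b → d (Sum.inr a) (Sum.inl j) ≤ d (Sum.inr b) (Sum.inl j)

/-- Expected social cost of the distribution `q` under metric `d`. -/
def cost (d : Pt → Pt → ℝ) (q : Fin 7 → ℝ) : ℝ :=
  ∑ i, q i * ∑ j, d (Sum.inr i) (Sum.inl j)

/-- Total cost of the clients if facility `o` is chosen. -/
def facCost (d : Pt → Pt → ℝ) (o : Fin 7) : ℝ :=
  ∑ j, d (Sum.inr o) (Sum.inl j)

/-- Optimal (minimum) total cost over all facilities. -/
noncomputable def OPT (d : Pt → Pt → ℝ) : ℝ :=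
  Finset.univ.inf' Finset.univ_nonempty (facCost d)

/-- The block graph for `d^a`: vertices are the blocks
`0 = B1 = {1,2,3}`, `1 = B2 = {4,5,6}`, `2 = {7}`, `3 = {a}`, `4 = {b}`,
`5 = {c,e}`, `6 = {d,f,g}`, with edges B1–a, B1–b, B1–{c,e}, B2–{d,f,g},
B2–a, 7–a, 7–b. -/
def graphA : SimpleGraph (Fin 7) :=
  SimpleGraph.fromRel (fun u v =>
    (u, v) ∈ ([(0, 3), (0, 4), (0, 5), (1, 6), (1, 3), (2, 3), (2, 4)] :
      List (Fin 7 × Fin 7)))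

/-- The block of each point (clients 1,2,3 ↦ B1, clients 4,5,6 ↦ B2,
client 7 ↦ {7}; facilities a ↦ {a}, b ↦ {b}, c,e ↦ {c,e}, d,f,g ↦ {d,f,g}). -/
def blkA : Pt → Fin 7
  | Sum.inl j => if j.val ≤ 2 then 0 else if j.val ≤ 5 then 1 else 2
  | Sum.inr i => ![3, 4, 5, 6, 5, 6, 6] i

/-- `d^a` is `M_a = 0.014507` times the graph distance between the blocks of the
two points (points in the same block are at distance 0). -/
noncomputable def dA : Pt → Pt → ℝ :=
  fun x y => 0.014507 * (graphA.dist (blkA x) (blkA y) : ℝ)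


namespace DAcert

def adjB (u v : Fin 7) : Bool :=
  decide ((u,v) ∈ ([(0,3),(0,4),(0,5),(1,6),(1,3),(2,3),(2,4),
    (3,0),(4,0),(5,0),(6,1),(3,1),(3,2),(4,2)] : List (Fin 7 × Fin 7)))

lemma adj_iff (u v : Fin 7) : graphA.Adj u v ↔ adjB u v = true := by
  rw [graphA, SimpleGraph.fromRel_adj]
  revert u v; decide

/-- Claimed distance matrix of `graphA`. -/
def D : Fin 7 → Fin 7 → ℕ :=
  ![![0,2,2,1,1,1,3],
    ![2,0,2,1,3,3,1],
    ![2,2,0,1,1,3,3],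
    ![1,1,1,0,2,2,2],
    ![1,3,1,2,0,2,4],
    ![1,3,3,2,2,0,4],
    ![3,1,3,2,4,4,0]]

lemma D_step : ∀ u x v : Fin 7, adjB u x = true → D u v ≤ D x v + 1 := by decide

lemma D_down : ∀ u v : Fin 7, u ≠ v → ∃ w, adjB u w = true ∧ D w v + 1 = D u v := by decide

lemma D_zero : ∀ u v : Fin 7, D u v = 0 → u = v := by decide

lemma D_refl : ∀ u : Fin 7, D u u = 0 := by decide

lemma walk_lb {u v : Fin 7} (p : graphA.Walk u v) : D u v ≤ p.length := by
  induction p with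
  | nil => simp [D_refl]
  | @cons a b c h p ih =>
      have := D_step a b c ((adj_iff a b).mp h)
      simp only [SimpleGraph.Walk.length_cons]
      omega

lemma dist_le_and_reach : ∀ n u v, D u v = n →
    graphA.dist u v ≤ n ∧ graphA.Reachable u v := by
  intro n
  induction n with
  | zero =>
      intro u v h
      obtain rfl := D_zero u v h
      exact ⟨by simp, SimpleGraph.Reachable.refl u⟩
  | succ n ih =>
      intro u v h
      have hne : u ≠ v := by rintro rfl; have := D_refl u; omega
      obtain ⟨w, hadj, hw⟩ := D_down u v hne
      have hadj' : graphA.Adj u w := (adj_iff u w).mpr hadj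
      obtain ⟨h1, h2⟩ := ih w v (by omega)
      refine ⟨?_, (hadj'.reachable).trans h2⟩
      obtain ⟨p, hp⟩ := h2.exists_walk_length_eq_dist
      have := SimpleGraph.dist_le (SimpleGraph.Walk.cons hadj' p)
      simp only [SimpleGraph.Walk.length_cons, hp] at this
      omega

lemma dist_eq (u v : Fin 7) : graphA.dist u v = D u v := by
  obtain ⟨h1, h2⟩ := dist_le_and_reach (D u v) u v rfl
  refine le_antisymm h1 ?_
  obtain ⟨p, hp⟩ := h2.exists_walk_length_eq_dist
  calc D u v ≤ p.length := walk_lb p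
  _ = _ := hp

lemma dA_eq (x y : Pt) : dA x y = 0.014507 * (D (blkA x) (blkA y) : ℝ) := by
  rw [dA, dist_eq]

lemma facCost_eq (o : Fin 7) : facCost dA o =
    0.014507 * ((∑ j : Fin 7, D (blkA (Sum.inr o)) (blkA (Sum.inl j)) : ℕ) : ℝ) := by
  simp [facCost, dA_eq, Finset.mul_sum]

lemma sum_vals : ∀ o : Fin 7,
    (∑ j : Fin 7, D (blkA (Sum.inr o)) (blkA (Sum.inl j))) = ![7,13,15,15,15,15,15] o := by
  decide

end DAcert

open DAcert in

/-- `d^a` is a pseudometric consistent with `σ*`, the total client cost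
of facility `a` is `7 · M_a > 0`, and `a` minimizes the total client cost. -/
theorem dA_certificate :
    IsPseudometric dA ∧ Consistent dA sigmaStar ∧
      facCost dA 0 = 7 * 0.014507 ∧ 0 < facCost dA 0 ∧
      ∀ o : Fin 7, facCost dA 0 ≤ facCost dA o := by
  have hM : (0:ℝ) < 0.014507 := by norm_num
  have Dsymm : ∀ u v : Fin 7, D u v = D v u := by decide
  have Dtri : ∀ u v w : Fin 7, D u v ≤ D u w + D v w := by decide
  refine ⟨⟨?_, ?_, ?_, ?_⟩, ?_, ?_, ?_, ?_⟩
  · intro x y; rw [dA_eq]; positivity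
  · intro x y; rw [dA_eq, dA_eq, Dsymm]
  · intro x; rw [dA_eq]
    have : D (blkA x) (blkA x) = 0 := by
      have : ∀ u : Fin 7, D u u = 0 := by decide
      exact this _
    simp [this]
  · intro x y z
    rw [dA_eq, dA_eq, dA_eq]
    have := Dtri (blkA x) (blkA y) (blkA z)
    have : (D (blkA x) (blkA y) : ℝ) ≤ (D (blkA x) (blkA z) : ℝ) + (D (blkA y) (blkA z) : ℝ) := by
      exact_mod_cast Nat.le_trans this (le_refl _)
    nlinarith
  · intro j a b hab
    rw [dA_eq, dA_eq]
    have h : D (blkA (Sum.inr a)) (blkA (Sum.inl j)) ≤ D (blkA (Sum.inr b)) (blkA (Sum.inl j)) := by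
      have key : ∀ j a b : Fin 7, rkStar j a ≤ rkStar j b →
          D (blkA (Sum.inr a)) (blkA (Sum.inl j)) ≤ D (blkA (Sum.inr b)) (blkA (Sum.inl j)) := by
        decide
      exact key j a b hab
    have h' : (D (blkA (Sum.inr a)) (blkA (Sum.inl j)) : ℝ) ≤
        (D (blkA (Sum.inr b)) (blkA (Sum.inl j)) : ℝ) := by exact_mod_cast h
    nlinarith
  · rw [facCost_eq, sum_vals]; norm_num
  · rw [facCost_eq, sum_vals]; norm_num
  · intro o
    rw [facCost_eq, facCost_eq, sum_vals, sum_vals]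
    fin_cases o <;> norm_num
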